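/- Let p ≥ 1 and let X : ℝ → ℝ belong to L^p on a neighborhood of 0, be self-similar at 0 with scaling ratio a > 1 and exponent α ∈ ℝ (i.e., a^α X(x) = X(ax) for almost every x), and suppose X does not coincide almost everywhere with a polynomial on any neighborhood of 0. Then α > -1/p, and the p-exponent of X at 0 equals α. -/

import Mathlib

/-!
Write `I(r) = ∫_{-r}^{r} |X|^p`. Self-similarity gives `I(a r) = a^(1+αp) I(r)`; since `X` does not
vanish a.e. near `0`, `I` is positive, so letting `r → 0` along `r₀ a⁻ⁿ` forces `1 + αp > 0`, and
comparing an arbitrary `r` with the nearest `r₀ a⁻ⁿ` gives `I(r) ≍ r^(1+αp)`. The upper bound is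
`X ∈ T^p_α(0)` with `P = 0`.

Conversely, let `X ∈ T^p_β(0)` with polynomial `P` and put `D = X - P`. The polynomial
`T(x) = a^α P(x) - P(a x)` equals `D(a x) - a^α D(x)` a.e., so its mass on `(-r, r)` is
`O(r^(1+βp))`, while a nonzero polynomial of trailing degree `m ≤ deg P < β` has mass of order
`r^(1+mp)`. Hence `T = 0`: `P` is itself self-similar, so `D` is self-similar and not a polynomial
near `0`, and its mass is of order `r^(1+αp)`. This is compatible with `O(r^(1+βp))` only if `β ≤ α`.
-/

open MeasureTheory

/-- `X ∈ T^p_α(x0)` in dimension 1. -/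
def TpAt1 (p : ℝ) (X : ℝ → ℝ) (x0 α : ℝ) : Prop :=
  ∃ C : ℝ, 0 < C ∧ ∃ P : Polynomial ℝ,
    (P = 0 ∨ (P.natDegree : ℝ) < α) ∧
    ∃ a0 : ℝ, 0 < a0 ∧ ∀ a : ℝ, 0 < a → a < a0 →
      ((1 / (2 * a)) * ∫ u in Set.Ioo (x0 - a) (x0 + a), |X u - P.eval u| ^ p) ^ (1 / p)
        ≤ C * a ^ α

/-- The `p`-exponent of `X` at `x0`. -/
noncomputable def pExponent1 (p : ℝ) (X : ℝ → ℝ) (x0 : ℝ) : EReal :=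
  sSup (Real.toEReal '' {α : ℝ | TpAt1 p X x0 α})

open Set Filter Topology

noncomputable def lpMass (p : ℝ) (f : ℝ → ℝ) (r : ℝ) : ℝ :=
  ∫ u in Ioo (-r) r, |f u| ^ p

def IsSelfSimilar (a α : ℝ) (X : ℝ → ℝ) : Prop :=
  ∀ᵐ x : ℝ, a ^ α * X x = X (a * x)

def IsPolynomialNearZero (X : ℝ → ℝ) : Prop :=
  ∃ (P : Polynomial ℝ) (δ : ℝ), 0 < δ ∧ ∀ᵐ x : ℝ, |x| < δ → X x = P.eval x

lemma Real.abs_add_rpow_le {p : ℝ} (hp : 0 ≤ p) (x y : ℝ) :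
    |x + y| ^ p ≤ 2 ^ p * (|x| ^ p + |y| ^ p) := by
  have hmax : |x + y| ≤ 2 * max |x| |y| :=
    (abs_add_le x y).trans (by linarith [le_max_left |x| |y|, le_max_right |x| |y|])
  calc |x + y| ^ p ≤ (2 * max |x| |y|) ^ p := Real.rpow_le_rpow (abs_nonneg _) hmax hp
    _ = 2 ^ p * max |x| |y| ^ p := Real.mul_rpow zero_le_two (le_max_of_le_left (abs_nonneg x))
    _ ≤ 2 ^ p * (|x| ^ p + |y| ^ p) := by
      gcongr
      rcases le_total |x| |y| with h | h
      · rw [max_eq_right h]; linarith [Real.rpow_nonneg (abs_nonneg x) p]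
      · rw [max_eq_left h]; linarith [Real.rpow_nonneg (abs_nonneg y) p]

lemma integrableOn_comp_mul_left_Ioo {g : ℝ → ℝ} {c r : ℝ} (hc : 0 < c) (hr : 0 ≤ r)
    (hg : IntegrableOn g (Ioo (-(c * r)) (c * r))) :
    IntegrableOn (fun x => g (c * x)) (Ioo (-r) r) := by
  have hgi : IntervalIntegrable g volume (-(c * r)) (c * r) :=
    (intervalIntegrable_iff_integrableOn_Ioo_of_le (by nlinarith)).2 hg
  have := hgi.comp_mul_left (c := c)
  rw [neg_div, mul_div_cancel_left₀ r hc.ne'] at this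
  exact (intervalIntegrable_iff_integrableOn_Ioo_of_le (by linarith)).1 this

section lpMass

variable {p r r0 : ℝ} {f g : ℝ → ℝ}

lemma lpMass_nonneg : 0 ≤ lpMass p f r :=
  integral_nonneg fun _ => Real.rpow_nonneg (abs_nonneg _) _

lemma lpMass_congr (h : ∀ᵐ x, f x = g x) : lpMass p f r = lpMass p g r :=
  setIntegral_congr_ae measurableSet_Ioo (by filter_upwards [h] with x hx _ using by rw [hx])

lemma lpMass_const_mul (c : ℝ) : lpMass p (fun x => c * f x) r = |c| ^ p * lpMass p f r := by
  simp only [lpMass, abs_mul, Real.mul_rpow (abs_nonneg _) (abs_nonneg _), integral_const_mul]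

lemma lpMass_comp_mul_left {c : ℝ} (hc : 0 < c) (hr : 0 ≤ r) :
    lpMass p (fun x => f (c * x)) r = c⁻¹ * lpMass p f (c * r) := by
  have h := intervalIntegral.integral_comp_mul_left (fun u => |f u| ^ p) hc.ne' (a := -r) (b := r)
  rw [mul_neg, intervalIntegral.integral_of_le (by linarith),
    intervalIntegral.integral_of_le (by nlinarith), integral_Ioc_eq_integral_Ioo,
    integral_Ioc_eq_integral_Ioo] at h
  exact h

lemma integrableOn_abs_rpow_of_memLp (hp : 0 < p)
    (hf : MemLp f (ENNReal.ofReal p) (volume.restrict (Ioo (-r0) r0))) (hr : r ≤ r0) :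
    IntegrableOn (fun u => |f u| ^ p) (Ioo (-r) r) := by
  have h := hf.integrable_norm_rpow (by simpa using hp) ENNReal.ofReal_ne_top
  rw [ENNReal.toReal_ofReal hp.le] at h
  exact IntegrableOn.mono_set h (Ioo_subset_Ioo (neg_le_neg hr) hr)

lemma lpMass_mono {r' : ℝ} (hint : IntegrableOn (fun u => |f u| ^ p) (Ioo (-r') r'))
    (h : r ≤ r') : lpMass p f r ≤ lpMass p f r' :=
  setIntegral_mono_set hint (ae_of_all _ fun _ => Real.rpow_nonneg (abs_nonneg _) _)
    (Ioo_subset_Ioo (neg_le_neg h) h).eventuallyLE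

lemma lpMass_add_le (hp : 0 ≤ p) (hf : IntegrableOn (fun u => |f u| ^ p) (Ioo (-r) r))
    (hg : IntegrableOn (fun u => |g u| ^ p) (Ioo (-r) r)) :
    lpMass p (fun x => f x + g x) r ≤ 2 ^ p * (lpMass p f r + lpMass p g r) := by
  rw [lpMass, lpMass, lpMass, ← integral_add hf hg, ← integral_const_mul]
  exact integral_mono_of_nonneg (ae_of_all _ fun _ => Real.rpow_nonneg (abs_nonneg _) _)
    ((hf.add hg).const_mul _) (ae_of_all _ fun x => Real.abs_add_rpow_le hp (f x) (g x))

lemma lpMass_pos (hp : 0 < p) (hf : MemLp f (ENNReal.ofReal p) (volume.restrict (Ioo (-r0) r0)))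
    (hpoly : ¬ IsPolynomialNearZero f) (hr : 0 < r) (hrr0 : r ≤ r0) : 0 < lpMass p f r := by
  refine lpMass_nonneg.lt_of_ne fun h => hpoly ⟨0, r, hr, ?_⟩
  have hzero := (setIntegral_eq_zero_iff_of_nonneg_ae
    (ae_of_all _ fun _ => Real.rpow_nonneg (abs_nonneg _) p)
    (integrableOn_abs_rpow_of_memLp hp hf hrr0)).1 h.symm
  rw [EventuallyEq, ae_restrict_iff' measurableSet_Ioo] at hzero
  filter_upwards [hzero] with x hx hxr
  have h0 : |f x| ^ p = 0 := hx (abs_lt.1 hxr)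
  rw [Polynomial.eval_zero, ← abs_eq_zero, ← Real.rpow_eq_zero (abs_nonneg _) hp.ne', h0]

lemma tendsto_lpMass_div_pow {a : ℝ} (hp : 0 < p) (ha : 1 < a) (hr0 : 0 < r0)
    (hf : MemLp f (ENNReal.ofReal p) (volume.restrict (Ioo (-r0) r0))) :
    Tendsto (fun n : ℕ => lpMass p f (r0 / a ^ n)) atTop (𝓝 0) := by
  have hlim : Tendsto (fun n : ℕ => r0 / a ^ n) atTop (𝓝 0) :=
    tendsto_const_nhds.div_atTop (tendsto_pow_atTop_atTop_of_one_lt ha)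
  have hanti : Antitone fun n : ℕ => Ioo (-(r0 / a ^ n)) (r0 / a ^ n) := fun n m hnm => by
    have : r0 / a ^ m ≤ r0 / a ^ n := by gcongr; exact ha.le
    exact Ioo_subset_Ioo (neg_le_neg this) this
  have hnull : volume (⋂ n : ℕ, Ioo (-(r0 / a ^ n)) (r0 / a ^ n)) = 0 := by
    refine measure_mono_null (fun x hx => ?_) (measure_singleton 0)
    have hle : |x| ≤ 0 := ge_of_tendsto hlim (Eventually.of_forall fun n =>
      (abs_lt.2 (mem_iInter.1 hx n)).le)
    exact abs_nonpos_iff.1 hle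
  have h := tendsto_setIntegral_of_antitone (fun _ => measurableSet_Ioo) hanti
    ⟨0, by simpa using integrableOn_abs_rpow_of_memLp hp hf le_rfl⟩
  rwa [Measure.restrict_eq_zero.2 hnull, integral_zero_measure] at h

lemma eventually_lpMass_comp_mul_add_le {a c e K : ℝ} (hp : 0 < p) (ha : 0 < a) (hr0 : 0 < r0)
    (hf : MemLp f (ENNReal.ofReal p) (volume.restrict (Ioo (-r0) r0)))
    (hK : ∀ᶠ r in 𝓝[>] (0 : ℝ), lpMass p f r ≤ K * r ^ e) :
    ∀ᶠ r in 𝓝[>] (0 : ℝ), lpMass p (fun x => f (a * x) + c * f x) r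
      ≤ 2 ^ p * (a⁻¹ * K * a ^ e + |c| ^ p * K) * r ^ e := by
  have hscale : Tendsto (fun r => a * r) (𝓝[>] 0) (𝓝[>] 0) :=
    tendsto_nhdsWithin_iff.2 ⟨((continuous_const_mul a).tendsto' 0 0 (mul_zero a)).mono_left
      nhdsWithin_le_nhds, eventually_nhdsWithin_of_forall fun r hr => mul_pos ha hr⟩
  filter_upwards [hK, hscale.eventually hK, Ioo_mem_nhdsGT (div_pos hr0 ha), Ioo_mem_nhdsGT hr0]
    with r hK_r hK_ar ⟨hr, hra⟩ ⟨_, hrr0⟩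
  have har : a * r ≤ r0 := ((lt_div_iff₀' ha).1 hra).le
  calc lpMass p (fun x => f (a * x) + c * f x) r
      ≤ 2 ^ p * (lpMass p (fun x => f (a * x)) r + lpMass p (fun x => c * f x) r) :=
        lpMass_add_le hp.le
          (integrableOn_comp_mul_left_Ioo (g := fun u => |f u| ^ p) ha hr.le
            (integrableOn_abs_rpow_of_memLp hp hf har))
          (integrableOn_abs_rpow_of_memLp hp (hf.const_mul c) hrr0.le)
    _ = 2 ^ p * (a⁻¹ * lpMass p f (a * r) + |c| ^ p * lpMass p f r) := by
        rw [lpMass_comp_mul_left ha hr.le, lpMass_const_mul]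
    _ ≤ 2 ^ p * (a⁻¹ * (K * (a * r) ^ e) + |c| ^ p * (K * r ^ e)) := by gcongr
    _ = 2 ^ p * (a⁻¹ * K * a ^ e + |c| ^ p * K) * r ^ e := by
        rw [Real.mul_rpow ha.le hr.le]; ring

end lpMass

lemma exists_pow_mul_mem_Ioc {a r r0 : ℝ} (ha : 1 < a) (hr : 0 < r) (hrr0 : r ≤ r0) :
    ∃ n : ℕ, r0 < a ^ (n + 1) * r ∧ a ^ n * r ≤ r0 := by
  obtain ⟨n, h1, h2⟩ := exists_nat_pow_near ((one_le_div hr).2 hrr0) ha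
  exact ⟨n, (div_lt_iff₀ hr).1 h2, (le_div_iff₀ hr).1 h1⟩

namespace IsSelfSimilar

variable {p a α r r0 : ℝ} {X : ℝ → ℝ}

lemma lpMass_mul (ha : 0 < a) (hX : IsSelfSimilar a α X) (hr : 0 ≤ r) :
    lpMass p X (a * r) = a ^ (1 + α * p) * lpMass p X r := by
  have h := lpMass_comp_mul_left (p := p) (f := X) ha hr
  rw [← lpMass_congr hX, lpMass_const_mul, abs_of_pos (Real.rpow_pos_of_pos ha α),
    ← Real.rpow_mul ha.le] at h
  rw [Real.rpow_add ha, Real.rpow_one, mul_assoc, h, ← mul_assoc, mul_inv_cancel₀ ha.ne', one_mul]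

lemma lpMass_pow_mul (ha : 0 < a) (hX : IsSelfSimilar a α X) (hr : 0 ≤ r) (n : ℕ) :
    lpMass p X (a ^ n * r) = (a ^ n) ^ (1 + α * p) * lpMass p X r := by
  induction n with
  | zero => simp
  | succ n ih =>
    rw [pow_succ', mul_assoc, hX.lpMass_mul ha (by positivity), ih, ← mul_assoc,
      Real.mul_rpow ha.le (by positivity)]

variable (hp : 0 < p) (ha : 1 < a) (hr0 : 0 < r0)
  (hf : MemLp X (ENNReal.ofReal p) (volume.restrict (Ioo (-r0) r0)))
  (hX : IsSelfSimilar a α X) (hpoly : ¬ IsPolynomialNearZero X)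
include hp ha hr0 hf hX hpoly

lemma one_add_mul_pos : 0 < 1 + α * p := by
  by_contra! hs
  have hle (n : ℕ) : lpMass p X r0 ≤ lpMass p X (r0 / a ^ n) := by
    have h := hX.lpMass_pow_mul (p := p) (r := r0 / a ^ n) (by linarith) (by positivity) n
    rw [mul_div_cancel₀ r0 (by positivity)] at h
    rw [h]
    exact mul_le_of_le_one_left lpMass_nonneg
      (Real.rpow_le_one_of_one_le_of_nonpos (one_le_pow₀ ha.le) hs)
  exact (lpMass_pos hp hf hpoly hr0 le_rfl).not_ge
    (ge_of_tendsto (tendsto_lpMass_div_pow hp ha hr0 hf) (Eventually.of_forall hle))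

lemma exists_lpMass_le : ∃ c > 0, ∀ r ∈ Ioc 0 r0, lpMass p X r ≤ c * r ^ (1 + α * p) := by
  have hs := hX.one_add_mul_pos hp ha hr0 hf hpoly
  refine ⟨lpMass p X r0 * (a / r0) ^ (1 + α * p),
    mul_pos (lpMass_pos hp hf hpoly hr0 le_rfl) (by positivity), fun r ⟨hr, hrr0⟩ => ?_⟩
  obtain ⟨n, hlow, hup⟩ := exists_pow_mul_mem_Ioc ha hr hrr0
  have hmono : lpMass p X (a ^ n * r) ≤ lpMass p X r0 :=
    lpMass_mono (integrableOn_abs_rpow_of_memLp hp hf le_rfl) hup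
  have hpow : (r0 / (a * r)) ^ (1 + α * p) ≤ (a ^ n) ^ (1 + α * p) := by
    refine Real.rpow_le_rpow (by positivity) ?_ hs.le
    rw [div_le_iff₀ (by positivity)]
    exact (hlow.trans_eq (by ring)).le
  calc lpMass p X r = lpMass p X (a ^ n * r) / (a ^ n) ^ (1 + α * p) := by
        rw [hX.lpMass_pow_mul (by linarith) hr.le]; field_simp
    _ ≤ lpMass p X r0 / (r0 / (a * r)) ^ (1 + α * p) :=
        div_le_div₀ lpMass_nonneg hmono (by positivity) hpow
    _ = lpMass p X r0 * (a / r0) ^ (1 + α * p) * r ^ (1 + α * p) := by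
        rw [Real.div_rpow hr0.le (by positivity), Real.div_rpow (by positivity) hr0.le,
          Real.mul_rpow (by positivity) hr.le]
        field_simp

lemma exists_le_lpMass : ∃ c > 0, ∀ r ∈ Ioc 0 r0, c * r ^ (1 + α * p) ≤ lpMass p X r := by
  have hs := hX.one_add_mul_pos hp ha hr0 hf hpoly
  have hr0a : r0 / a ≤ r0 := div_le_self hr0.le (by linarith)
  refine ⟨lpMass p X (r0 / a) / r0 ^ (1 + α * p),
    div_pos (lpMass_pos hp hf hpoly (by positivity) hr0a) (by positivity),
    fun r ⟨hr, hrr0⟩ => ?_⟩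
  obtain ⟨n, hlow, hup⟩ := exists_pow_mul_mem_Ioc ha hr hrr0
  have hmono : lpMass p X (r0 / a) ≤ lpMass p X (a ^ n * r) := by
    refine lpMass_mono (integrableOn_abs_rpow_of_memLp hp hf hup) ?_
    rw [div_le_iff₀ (by linarith)]
    exact (hlow.trans_eq (by ring)).le
  have hpow : (a ^ n) ^ (1 + α * p) ≤ (r0 / r) ^ (1 + α * p) :=
    Real.rpow_le_rpow (by positivity) ((le_div_iff₀ hr).2 hup) hs.le
  calc lpMass p X (r0 / a) / r0 ^ (1 + α * p) * r ^ (1 + α * p)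
        = lpMass p X (r0 / a) / (r0 / r) ^ (1 + α * p) := by
        rw [Real.div_rpow hr0.le hr.le]; field_simp
    _ ≤ lpMass p X (a ^ n * r) / (a ^ n) ^ (1 + α * p) :=
        div_le_div₀ lpMass_nonneg hmono (by positivity) hpow
    _ = lpMass p X r := by
        rw [hX.lpMass_pow_mul (by linarith) hr.le]; field_simp

end IsSelfSimilar

lemma rpow_average_le_iff {p C β r J : ℝ} (hp : 0 < p) (hC : 0 ≤ C) (hr : 0 < r) (hJ : 0 ≤ J) :
    ((1 / (2 * r)) * J) ^ (1 / p) ≤ C * r ^ β ↔ J ≤ 2 * C ^ p * r ^ (β * p + 1) := by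
  rw [one_div p, Real.rpow_inv_le_iff_of_pos (by positivity) (by positivity) hp,
    Real.mul_rpow hC (by positivity), ← Real.rpow_mul hr.le, Real.rpow_add hr, Real.rpow_one,
    one_div, ← div_eq_inv_mul, div_le_iff₀ (by positivity)]
  ring_nf

lemma not_eventually_mul_rpow_le {A B t s : ℝ} (hA : 0 < A) (hts : t < s) :
    ¬ ∀ᶠ r in 𝓝[>] (0 : ℝ), A * r ^ t ≤ B * r ^ s := by
  intro h
  have hst : 0 < s - t := sub_pos.2 hts
  have hlim : Tendsto (fun r : ℝ => B * r ^ (s - t)) (𝓝[>] 0) (𝓝 0) := by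
    have := ((Real.continuousAt_rpow_const 0 (s - t) (Or.inr hst.le)).tendsto).const_mul B
    rw [Real.zero_rpow hst.ne', mul_zero] at this
    exact tendsto_nhdsWithin_of_tendsto_nhds this
  obtain ⟨r, ⟨hle, hlt⟩, hr⟩ :=
    (h.and (hlim.eventually (gt_mem_nhds hA))).and self_mem_nhdsWithin |>.exists
  have hsplit : B * r ^ s = B * r ^ (s - t) * r ^ t := by
    rw [mul_assoc, ← Real.rpow_add hr, sub_add_cancel]
  have hrt : 0 < r ^ t := Real.rpow_pos_of_pos hr t
  nlinarith

namespace Polynomial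

lemma memLp_eval_restrict_Ioo (P : Polynomial ℝ) (q : ENNReal) (r : ℝ) :
    MemLp (fun x => P.eval x) q (volume.restrict (Ioo (-r) r)) := by
  obtain ⟨M, hM⟩ := (isCompact_Icc (a := -r) (b := r)).exists_bound_of_continuousOn
    P.continuous.continuousOn
  refine MemLp.of_bound P.continuous.aestronglyMeasurable M ?_
  rw [ae_restrict_iff' measurableSet_Ioo]
  exact ae_of_all _ fun x hx => hM x (Ioo_subset_Icc_self hx)

lemma exists_eventually_mul_pow_le_abs_eval {R : Polynomial ℝ} (hR : R ≠ 0) :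
    ∃ ε > 0, ∀ᶠ u in 𝓝 (0 : ℝ), ε * |u| ^ R.natTrailingDegree ≤ |R.eval u| := by
  obtain ⟨q, hRq, hq⟩ := R.exists_eq_pow_rootMultiplicity_mul_and_not_dvd hR 0
  rw [map_zero, sub_zero, rootMultiplicity_eq_natTrailingDegree'] at hRq
  rw [map_zero, sub_zero, X_dvd_iff, coeff_zero_eq_eval_zero] at hq
  set m := R.natTrailingDegree
  refine ⟨|q.eval 0| / 2, half_pos (abs_pos.2 hq), ?_⟩
  filter_upwards [(q.continuous.abs.tendsto 0).eventually
    (lt_mem_nhds (half_lt_self (abs_pos.2 hq)))] with u hu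
  rw [hRq, eval_mul, eval_pow, eval_X, abs_mul, abs_pow, mul_comm]
  exact mul_le_mul_of_nonneg_left hu.le (by positivity)

lemma exists_eventually_le_lpMass {p : ℝ} (hp : 0 ≤ p) {R : Polynomial ℝ} (hR : R ≠ 0) :
    ∃ c > 0, ∀ᶠ r in 𝓝[>] (0 : ℝ),
      c * r ^ (R.natTrailingDegree * p + 1) ≤ lpMass p (fun x => R.eval x) r := by
  obtain ⟨ε, hε, hnear⟩ := R.exists_eventually_mul_pow_le_abs_eval hR
  obtain ⟨δ, hδ, hδR⟩ := Metric.eventually_nhds_iff.1 hnear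
  set m := R.natTrailingDegree
  refine ⟨ε ^ p / 2 ^ (m * p + 1), by positivity, ?_⟩
  filter_upwards [Ioo_mem_nhdsGT hδ] with r ⟨hr, hrδ⟩
  have hpt : ∀ u ∈ Ioo (r / 2) r, (ε * (r / 2) ^ m) ^ p ≤ |R.eval u| ^ p := by
    rintro u ⟨hu1, hu2⟩
    have hu0 : 0 < u := by linarith
    have hRu := hδR (show dist u 0 < δ by rw [Real.dist_eq, sub_zero, abs_of_pos hu0]; linarith)
    rw [abs_of_pos hu0] at hRu
    refine Real.rpow_le_rpow (by positivity) (le_trans ?_ hRu) hp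
    exact mul_le_mul_of_nonneg_left (pow_le_pow_left₀ (by positivity) hu1.le m) hε.le
  have hint : IntegrableOn (fun u => |R.eval u| ^ p) (Ioo (-r) r) :=
    ((R.continuous.abs.rpow_const fun _ => Or.inr hp).continuousOn.integrableOn_compact
      isCompact_Icc).mono_set Ioo_subset_Icc_self
  calc ε ^ p / 2 ^ (m * p + 1) * r ^ (m * p + 1) = (ε * (r / 2) ^ m) ^ p * (r - r / 2) := by
        rw [Real.mul_rpow hε.le (by positivity), ← Real.rpow_natCast, ← Real.rpow_mul (by positivity),
          Real.div_rpow hr.le zero_le_two, Real.rpow_add_one hr.ne', Real.rpow_add_one two_ne_zero]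
        field_simp
        ring
    _ ≤ ∫ u in Ioo (r / 2) r, |R.eval u| ^ p := by
        rw [← Real.volume_real_Ioo_of_le (by linarith)]
        exact setIntegral_ge_of_const_le_real measurableSet_Ioo measure_Ioo_lt_top.ne hpt
          (hint.mono_set (Ioo_subset_Ioo (by linarith) le_rfl))
    _ ≤ lpMass p (fun x => R.eval x) r :=
        setIntegral_mono_set hint (ae_of_all _ fun _ => Real.rpow_nonneg (abs_nonneg _) _)
          (Ioo_subset_Ioo (by linarith) le_rfl).eventuallyLE

end Polynomial

namespace IsSelfSimilar

variable {p a α β r0 K : ℝ} {X : ℝ → ℝ}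

theorem tpAt1 (hp : 0 < p) (ha : 1 < a) (hr0 : 0 < r0)
    (hf : MemLp X (ENNReal.ofReal p) (volume.restrict (Ioo (-r0) r0)))
    (hX : IsSelfSimilar a α X) (hpoly : ¬ IsPolynomialNearZero X) : TpAt1 p X 0 α := by
  obtain ⟨c, hc, hle⟩ := hX.exists_lpMass_le hp ha hr0 hf hpoly
  refine ⟨(c / 2) ^ (1 / p), by positivity, 0, Or.inl rfl, r0, hr0, fun r hr hrr0 => ?_⟩
  simp only [Polynomial.eval_zero, sub_zero, zero_sub, zero_add]
  refine (rpow_average_le_iff hp (by positivity) hr lpMass_nonneg).2 ?_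
  rw [← Real.rpow_mul (by positivity), one_div_mul_cancel hp.ne', Real.rpow_one]
  calc lpMass p X r ≤ c * r ^ (1 + α * p) := hle r ⟨hr, hrr0.le⟩
    _ = 2 * (c / 2) * r ^ (α * p + 1) := by ring_nf

lemma isSelfSimilar_eval_of_lpMass_sub_le (hp : 0 < p) (ha : 0 < a) (hr0 : 0 < r0)
    (hf : MemLp X (ENNReal.ofReal p) (volume.restrict (Ioo (-r0) r0)))
    (hX : IsSelfSimilar a α X) {P : Polynomial ℝ} (hP : P = 0 ∨ (P.natDegree : ℝ) < β)
    (hK : ∀ᶠ r in 𝓝[>] (0 : ℝ), lpMass p (fun x => X x - P.eval x) r ≤ K * r ^ (β * p + 1)) :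
    IsSelfSimilar a α (fun x => P.eval x) := by
  set D : ℝ → ℝ := fun x => X x - P.eval x
  set T : Polynomial ℝ := Polynomial.C (a ^ α) * P - P.comp (Polynomial.C a * Polynomial.X)
  have hT_eval (x : ℝ) : T.eval x = a ^ α * P.eval x - P.eval (a * x) := by simp [T]
  suffices hT0 : T = 0 by
    refine ae_of_all _ fun x => ?_
    have h := hT_eval x
    rw [hT0, Polynomial.eval_zero] at h
    linarith
  by_contra hT0
  have hP0 : P ≠ 0 := by rintro rfl; simp [T] at hT0
  have hdeg : (T.natTrailingDegree : ℝ) < β := by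
    refine lt_of_le_of_lt ?_ (hP.resolve_left hP0)
    have hTP : T.natDegree ≤ P.natDegree := by
      refine (Polynomial.natDegree_sub_le _ _).trans (max_le (Polynomial.natDegree_C_mul_le _ _) ?_)
      rw [Polynomial.natDegree_comp, Polynomial.natDegree_C_mul_X a ha.ne', mul_one]
    exact_mod_cast T.natTrailingDegree_le_natDegree.trans hTP
  have hT_ae : ∀ᵐ x, T.eval x = D (a * x) + -a ^ α * D x := by
    filter_upwards [hX] with x hx
    rw [hT_eval]
    simp only [D]
    rw [← hx]
    ring
  obtain ⟨c, hc, hlow⟩ := Polynomial.exists_eventually_le_lpMass hp.le hT0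
  have hup := eventually_lpMass_comp_mul_add_le (c := -a ^ α) hp ha hr0
    (hf.sub (P.memLp_eval_restrict_Ioo _ r0)) hK
  exact not_eventually_mul_rpow_le hc (by nlinarith)
    ((hlow.and hup).mono fun r h => h.1.trans ((lpMass_congr hT_ae).trans_le h.2))

theorem le_of_tpAt1 (hp : 0 < p) (ha : 1 < a) (hr0 : 0 < r0)
    (hf : MemLp X (ENNReal.ofReal p) (volume.restrict (Ioo (-r0) r0)))
    (hX : IsSelfSimilar a α X) (hpoly : ¬ IsPolynomialNearZero X) (hβ : TpAt1 p X 0 β) :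
    β ≤ α := by
  by_contra! hαβ
  obtain ⟨C, hC, P, hP, a0, ha0, hbound⟩ := hβ
  have hK : ∀ᶠ r in 𝓝[>] (0 : ℝ),
      lpMass p (fun x => X x - P.eval x) r ≤ 2 * C ^ p * r ^ (β * p + 1) := by
    filter_upwards [Ioo_mem_nhdsGT ha0] with r hr
    have h := hbound r hr.1 hr.2
    rw [zero_sub, zero_add] at h
    exact (rpow_average_le_iff hp hC.le hr.1 lpMass_nonneg).1 h
  have hP_ss := hX.isSelfSimilar_eval_of_lpMass_sub_le hp (by linarith) hr0 hf hP hK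
  have hD_ss : IsSelfSimilar a α (fun x => X x - P.eval x) := by
    filter_upwards [hX, hP_ss] with x hXx hPx
    rw [mul_sub, hXx, hPx]
  have hD_poly : ¬ IsPolynomialNearZero (fun x => X x - P.eval x) := by
    rintro ⟨Q, δ, hδ, hQ⟩
    refine hpoly ⟨Q + P, δ, hδ, ?_⟩
    filter_upwards [hQ] with x hx hxδ
    rw [Polynomial.eval_add, ← hx hxδ, sub_add_cancel]
  have hD_mem : MemLp (fun x => X x - P.eval x) (ENNReal.ofReal p)
      (volume.restrict (Ioo (-r0) r0)) := hf.sub (P.memLp_eval_restrict_Ioo _ r0)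
  obtain ⟨c, hc, hlow⟩ := hD_ss.exists_le_lpMass hp ha hr0 hD_mem hD_poly
  refine not_eventually_mul_rpow_le (B := 2 * C ^ p) hc (by nlinarith : 1 + α * p < β * p + 1) ?_
  filter_upwards [hK, Ioc_mem_nhdsGT hr0] with r hKr hr using (hlow r hr).trans hKr

end IsSelfSimilar

/-- if `X ∈ L^p` near `0` is self-similar at `0` with scaling ratio `a > 1`
and exponent `α`, and does not coincide a.e. with a polynomial on any neighborhood of
`0`, then `α > -1/p` and the `p`-exponent of `X` at `0` is `α`. -/
theorem stmt13 (p a α : ℝ) (hp : 1 ≤ p) (ha : 1 < a) (X : ℝ → ℝ)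
    (hX : ∃ r : ℝ, 0 < r ∧
      MemLp X (ENNReal.ofReal p) (volume.restrict (Set.Ioo (-r) r)))
    (hss : ∀ᵐ x : ℝ, a ^ α * X x = X (a * x))
    (hpoly : ¬ ∃ (P : Polynomial ℝ) (δ : ℝ), 0 < δ ∧
      ∀ᵐ x : ℝ, |x| < δ → X x = P.eval x) :
    -1 / p < α ∧ pExponent1 p X 0 = (α : EReal) := by
  obtain ⟨r0, hr0, hXm⟩ := hX
  have hp0 : 0 < p := by linarith
  have hs : 0 < 1 + α * p := IsSelfSimilar.one_add_mul_pos hp0 ha hr0 hXm hss hpoly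
  refine ⟨by rw [div_lt_iff₀ hp0]; linarith, le_antisymm ?_ ?_⟩
  · refine sSup_le ?_
    rintro _ ⟨β, hβ, rfl⟩
    exact EReal.coe_le_coe_iff.2 (IsSelfSimilar.le_of_tpAt1 hp0 ha hr0 hXm hss hpoly hβ)
  · exact le_sSup ⟨α, IsSelfSimilar.tpAt1 hp0 ha hr0 hXm hss hpoly, rfl⟩
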